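/- arXiv:1711.02118 — 3 statements merged into one kernel-verified Lean document; each statement's English description precedes it below -/
import Mathlib

section
/- Let ν be a positive odd integer, I = ⋃_{j=1}^{(ν+1)/2} ((2j−2)π/(ν+1), (2j−1)π/(ν+1)) and I' = ⋃_{j=1}^{(ν+1)/2} ((2j−1)π/(ν+1), 2jπ/(ν+1)), both subsets of [0, π]. Then (4/π²)·∫_I ∫_{I'} sin²(θ₁) sin²(θ₂) dθ₂ dθ₁ = 1/4, and the same value 1/4 is obtained for each of the products I×I, I'×I', and I'×I. -/
open Real MeasureTheory

/-!
The double integrals factor, so it suffices that `∫_I sin² = ∫_{I'} sin² = π/4`. The cells of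
`I` and `I'` tile `(0, π)`, giving `∫_I sin² + ∫_{I'} sin² = ∫_0^π sin² = π/2`, and since
`ν + 1` is even the reflection `θ ↦ π - θ`, which preserves `sin²`, maps the `j`-th cell of `I'`
onto the `(ν + 3)/2 - j`-th cell of `I`, so the two integrals agree.
-/

theorem integral_biUnion_Ioo_eq_sum_intervalIntegral {ι : Type*} [LinearOrder ι] {f : ℝ → ℝ}
    (s : Finset ι) {c d : ι → ℝ} (hcd : ∀ i, c i ≤ d i) (hdc : ∀ i j, i < j → d i ≤ c j)
    (hf : ∀ i, IntervalIntegrable f volume (c i) (d i)) :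
    ∫ x in ⋃ i ∈ s, Set.Ioo (c i) (d i), f x = ∑ i ∈ s, ∫ x in c i..d i, f x := by
  have hdisj : ∀ i j, i < j → Disjoint (Set.Ioo (c i) (d i)) (Set.Ioo (c j) (d j)) :=
    fun i j hij => Set.Ioo_disjoint_Ioo.2
      ((min_le_left _ _).trans ((hdc i j hij).trans (le_max_right _ _)))
  rw [integral_biUnion_finset s (fun _ _ => measurableSet_Ioo)]
  · refine Finset.sum_congr rfl fun i _ => ?_
    rw [intervalIntegral.integral_of_le (hcd i), integral_Ioc_eq_integral_Ioo]
  · intro i _ j _ hij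
    rcases hij.lt_or_gt with h | h
    exacts [hdisj i j h, (hdisj j i h).symm]
  · exact fun i _ => ((hf i).1).mono_set Set.Ioo_subset_Ioc_self

theorem setIntegral_setIntegral_mul (S S' : Set ℝ) (f g : ℝ → ℝ) :
    ∫ x in S, ∫ y in S', f x * g y = (∫ x in S, f x) * ∫ y in S', g y := by
  simp_rw [integral_const_mul]
  exact integral_mul_const _ _

section Cells

variable {f : ℝ → ℝ} {T : ℝ} {m : ℕ}

def evenCells (T : ℝ) (m : ℕ) : Set ℝ :=
  ⋃ j ∈ Finset.Icc 1 m,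
    Set.Ioo ((2 * (j : ℝ) - 2) * T / (2 * m)) ((2 * (j : ℝ) - 1) * T / (2 * m))

def oddCells (T : ℝ) (m : ℕ) : Set ℝ :=
  ⋃ j ∈ Finset.Icc 1 m, Set.Ioo ((2 * (j : ℝ) - 1) * T / (2 * m)) (2 * (j : ℝ) * T / (2 * m))

theorem sum_integral_evenCell_add_oddCell (hf : ∀ a b, IntervalIntegrable f volume a b)
    (hm : m ≠ 0) :
    (∑ j ∈ Finset.Icc 1 m,
        ∫ x in (2 * (j : ℝ) - 2) * T / (2 * m)..(2 * (j : ℝ) - 1) * T / (2 * m), f x)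
      + (∑ j ∈ Finset.Icc 1 m,
        ∫ x in (2 * (j : ℝ) - 1) * T / (2 * m)..2 * (j : ℝ) * T / (2 * m), f x)
      = ∫ x in (0 : ℝ)..T, f x := by
  rw [← Finset.sum_add_distrib]
  simp_rw [intervalIntegral.integral_add_adjacent_intervals (hf _ _) (hf _ _)]
  rw [← Finset.Ico_add_one_right_eq_Icc, Finset.sum_Ico_eq_sum_range, Nat.add_sub_cancel]
  have hsum := intervalIntegral.sum_integral_adjacent_intervals
    (a := fun k : ℕ => 2 * (k : ℝ) * T / (2 * m)) (n := m) (fun k _ => hf _ _)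
  have hm' : (m : ℝ) ≠ 0 := Nat.cast_ne_zero.2 hm
  convert hsum using 2 with k
  · push_cast; ring_nf
  · push_cast; ring_nf
  · field_simp

theorem integral_oddCell_eq_integral_evenCell (hsymm : ∀ x, f (T - x) = f x) (hm : m ≠ 0)
    {j : ℕ} (hj : j ≤ m + 1) :
    ∫ x in (2 * (j : ℝ) - 1) * T / (2 * m)..2 * (j : ℝ) * T / (2 * m), f x
      = ∫ x in (2 * ((m + 1 - j : ℕ) : ℝ) - 2) * T / (2 * m)..
          (2 * ((m + 1 - j : ℕ) : ℝ) - 1) * T / (2 * m), f x := by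
  have hm' : (m : ℝ) ≠ 0 := Nat.cast_ne_zero.2 hm
  rw [← intervalIntegral.integral_congr (fun x _ => hsymm x),
    intervalIntegral.integral_comp_sub_left f T]
  push_cast [Nat.cast_sub hj]
  congr 1 <;> field_simp <;> ring

theorem sum_integral_oddCell_eq_sum_integral_evenCell (hsymm : ∀ x, f (T - x) = f x)
    (hm : m ≠ 0) :
    ∑ j ∈ Finset.Icc 1 m,
        ∫ x in (2 * (j : ℝ) - 1) * T / (2 * m)..2 * (j : ℝ) * T / (2 * m), f x
      = ∑ j ∈ Finset.Icc 1 m,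
          ∫ x in (2 * (j : ℝ) - 2) * T / (2 * m)..(2 * (j : ℝ) - 1) * T / (2 * m), f x := by
  rw [Finset.sum_congr rfl fun j hj => integral_oddCell_eq_integral_evenCell hsymm hm
    (by simp only [Finset.mem_Icc] at hj; omega)]
  refine Finset.sum_nbij' (m + 1 - ·) (m + 1 - ·) ?_ ?_ ?_ ?_ ?_ <;>
    intro j hj <;> simp only [Finset.mem_Icc] at hj ⊢ <;> omega

theorem integral_evenCells (hf : ∀ a b, IntervalIntegrable f volume a b)
    (hsymm : ∀ x, f (T - x) = f x) (hT : 0 ≤ T) (hm : m ≠ 0) :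
    ∫ x in evenCells T m, f x = (∫ x in (0 : ℝ)..T, f x) / 2 := by
  rw [evenCells, integral_biUnion_Ioo_eq_sum_intervalIntegral _ ?_ ?_ fun _ => hf _ _,
    ← sum_integral_evenCell_add_oddCell hf hm,
    sum_integral_oddCell_eq_sum_integral_evenCell hsymm hm]
  · ring
  · intro j
    gcongr ?_ * T / _; linarith
  · intro j k hjk
    have : (j : ℝ) + 1 ≤ k := by exact_mod_cast hjk
    gcongr ?_ * T / _; linarith

theorem integral_oddCells (hf : ∀ a b, IntervalIntegrable f volume a b)
    (hsymm : ∀ x, f (T - x) = f x) (hT : 0 ≤ T) (hm : m ≠ 0) :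
    ∫ x in oddCells T m, f x = (∫ x in (0 : ℝ)..T, f x) / 2 := by
  rw [oddCells, integral_biUnion_Ioo_eq_sum_intervalIntegral _ ?_ ?_ fun _ => hf _ _,
    ← sum_integral_evenCell_add_oddCell hf hm,
    sum_integral_oddCell_eq_sum_integral_evenCell hsymm hm]
  · ring
  · intro j
    gcongr ?_ * T / _; linarith
  · intro j k hjk
    have : (j : ℝ) + 1 ≤ k := by exact_mod_cast hjk
    gcongr ?_ * T / _; linarith

end Cells

theorem integral_sin_sq_zero_pi : ∫ x in (0 : ℝ)..π, sin x ^ 2 = π / 2 := by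
  simp [integral_sin_sq]

theorem sato_tate_product_measure_quarter_general
    (ν : ℕ) (hν : Odd ν)
    (I I' : Set ℝ)
    (hI : I = ⋃ j ∈ Finset.Icc 1 ((ν + 1) / 2),
        Set.Ioo ((2 * (j : ℝ) - 2) * π / ((ν : ℝ) + 1))
                ((2 * (j : ℝ) - 1) * π / ((ν : ℝ) + 1)))
    (hI' : I' = ⋃ j ∈ Finset.Icc 1 ((ν + 1) / 2),
        Set.Ioo ((2 * (j : ℝ) - 1) * π / ((ν : ℝ) + 1))
                (2 * (j : ℝ) * π / ((ν : ℝ) + 1))) :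
    (4 / π ^ 2) * (∫ θ₁ in I, ∫ θ₂ in I', Real.sin θ₁ ^ 2 * Real.sin θ₂ ^ 2) = 1 / 4 ∧
    (4 / π ^ 2) * (∫ θ₁ in I, ∫ θ₂ in I, Real.sin θ₁ ^ 2 * Real.sin θ₂ ^ 2) = 1 / 4 ∧
    (4 / π ^ 2) * (∫ θ₁ in I', ∫ θ₂ in I', Real.sin θ₁ ^ 2 * Real.sin θ₂ ^ 2) = 1 / 4 ∧
    (4 / π ^ 2) * (∫ θ₁ in I', ∫ θ₂ in I, Real.sin θ₁ ^ 2 * Real.sin θ₂ ^ 2) = 1 / 4 := by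
  set m := (ν + 1) / 2
  have hνm : ν + 1 = 2 * m := by obtain ⟨k, rfl⟩ := hν; omega
  have hm : m ≠ 0 := by omega
  have hN : (ν : ℝ) + 1 = 2 * m := by exact_mod_cast hνm
  have hf : ∀ a b, IntervalIntegrable (fun x => sin x ^ 2) volume a b :=
    fun a b => (continuous_sin.pow 2).intervalIntegrable a b
  have hsymm : ∀ x, sin (π - x) ^ 2 = sin x ^ 2 := fun x => by rw [sin_pi_sub]
  have hIint : ∫ x in I, sin x ^ 2 = π / 4 := by
    rw [hI, hN, ← evenCells, integral_evenCells hf hsymm pi_pos.le hm, integral_sin_sq_zero_pi]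
    ring
  have hI'int : ∫ x in I', sin x ^ 2 = π / 4 := by
    rw [hI', hN, ← oddCells, integral_oddCells hf hsymm pi_pos.le hm, integral_sin_sq_zero_pi]
    ring
  have quarter : ∀ S S' : Set ℝ, ∫ x in S, sin x ^ 2 = π / 4 → ∫ x in S', sin x ^ 2 = π / 4 →
      4 / π ^ 2 * ∫ x in S, ∫ y in S', sin x ^ 2 * sin y ^ 2 = 1 / 4 := by
    intro S S' hS hS'
    rw [setIntegral_setIntegral_mul, hS, hS']
    field_simp [pi_ne_zero]
  exact ⟨quarter I I' hIint hI'int, quarter I I hIint hIint, quarter I' I' hI'int hI'int,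
    quarter I' I hI'int hIint⟩

/-- 2-product Sato-Tate measure computation: for odd `ν`, each of the four products
`I×I'`, `I×I`, `I'×I'`, `I'×I` has 2-product Sato-Tate measure `1/4`. -/
theorem sato_tate_product_measure_quarter
    (ν : ℕ) (hν : Odd ν) (hν' : 0 < ν)
    (I I' : Set ℝ)
    (hI : I = ⋃ j ∈ Finset.Icc 1 ((ν + 1) / 2),
        Set.Ioo ((2 * (j : ℝ) - 2) * π / ((ν : ℝ) + 1))
                ((2 * (j : ℝ) - 1) * π / ((ν : ℝ) + 1)))
    (hI' : I' = ⋃ j ∈ Finset.Icc 1 ((ν + 1) / 2),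
        Set.Ioo ((2 * (j : ℝ) - 1) * π / ((ν : ℝ) + 1))
                (2 * (j : ℝ) * π / ((ν : ℝ) + 1))) :
    (4 / π ^ 2) * (∫ θ₁ in I, ∫ θ₂ in I', Real.sin θ₁ ^ 2 * Real.sin θ₂ ^ 2) = 1 / 4 ∧
    (4 / π ^ 2) * (∫ θ₁ in I, ∫ θ₂ in I, Real.sin θ₁ ^ 2 * Real.sin θ₂ ^ 2) = 1 / 4 ∧
    (4 / π ^ 2) * (∫ θ₁ in I', ∫ θ₂ in I', Real.sin θ₁ ^ 2 * Real.sin θ₂ ^ 2) = 1 / 4 ∧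
    (4 / π ^ 2) * (∫ θ₁ in I', ∫ θ₂ in I, Real.sin θ₁ ^ 2 * Real.sin θ₂ ^ 2) = 1 / 4 :=
  sato_tate_product_measure_quarter_general ν hν I I' hI hI'
end

section
/- Let θ₁, θ₂ be functions from the set of primes to [0, π] whose pairs are equidistributed with respect to the 2-product Sato-Tate measure, i.e. for all subintervals I₁, I₂ ⊆ [0, π], lim_{x→∞} #{p prime, p ≤ x : (θ₁(p), θ₂(p)) ∈ I₁ × I₂} / #{p prime, p ≤ x} = (4/π²)·∫_{I₁}∫_{I₂} sin²(t₁) sin²(t₂) dt₂ dt₁. Let ν be a positive odd integer. Then the set of primes p with sin((ν+1)θ₁(p))·sin((ν+1)θ₂(p)) > 0 has natural density 1/2, i.e. lim_{x→∞} #{p prime, p ≤ x : sin((ν+1)θ₁(p))·sin((ν+1)θ₂(p)) > 0} / #{p prime, p ≤ x} = 1/2. -/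
/-!
Put `m = ν + 1`, which is even, and cut `[0, π]` into the cells `(jπ/m, (j+1)π/m)`, `j < m`.
On the `j`-th cell `sin (m t)` has the sign of `(-1)^j`, and it vanishes at the cell endpoints, so
the product of the two sines is positive exactly when `(θ₁ p, θ₂ p)` lies in a product of cells
`j × k` with `j + k` even. Such an open box has the Sato–Tate density of the closed one, because
the difference lies in finitely many degenerate boxes. With `c_j` the Sato–Tate mass of the `j`-th
cell, the density is therefore `∑_{j+k even} c_j c_k = ((∑ c_j)² + (∑ (-1)^j c_j)²) / 2`. The first
sum is `1`; the second vanishes because `t ↦ π - t` preserves the Sato–Tate measure and, `m` being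
even, exchanges cells of opposite parity.
-/

open Real Filter MeasureTheory Set Topology

noncomputable def primeCount (P : ℕ → Prop) (x : ℕ) : ℕ :=
  Nat.card {p : ℕ | p ≤ x ∧ p.Prime ∧ P p}

noncomputable def primeRatio (P : ℕ → Prop) (x : ℕ) : ℝ :=
  primeCount P x / Nat.card {p : ℕ | p ≤ x ∧ p.Prime}

def HasPrimeDensity (P : ℕ → Prop) (c : ℝ) : Prop :=
  Tendsto (primeRatio P) atTop (𝓝 c)

section PrimeCount

variable {P Q N : ℕ → Prop} {x : ℕ}

lemma primeCount_eq_ncard : primeCount P x = {p | p ≤ x ∧ p.Prime ∧ P p}.ncard :=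
  Nat.card_coe_set_eq _

lemma primeCount_mono (h : ∀ p, p.Prime → P p → Q p) : primeCount P x ≤ primeCount Q x := by
  simp only [primeCount_eq_ncard]
  exact ncard_le_ncard (fun p hp => ⟨hp.1, hp.2.1, h p hp.2.1 hp.2.2⟩)
    ((finite_Iic x).subset fun p hp => hp.1)

lemma primeCount_or_le : primeCount (fun p => P p ∨ Q p) x ≤ primeCount P x + primeCount Q x := by
  simp only [primeCount_eq_ncard, and_or_left, ofPred_or]
  exact ncard_union_le _ _

lemma primeCount_or (h : ∀ p, p.Prime → P p → ¬ Q p) :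
    primeCount (fun p => P p ∨ Q p) x = primeCount P x + primeCount Q x := by
  simp only [primeCount_eq_ncard, and_or_left, ofPred_or]
  exact ncard_union_eq (disjoint_left.2 fun p hP hQ => h p hP.2.1 hP.2.2 hQ.2.2)
    ((finite_Iic x).subset fun p hp => hp.1) ((finite_Iic x).subset fun p hp => hp.1)

lemma primeRatio_le_add (h : ∀ p, p.Prime → Q p → P p ∨ N p) (x : ℕ) :
    primeRatio Q x ≤ primeRatio P x + primeRatio N x := by
  rw [primeRatio, primeRatio, primeRatio, ← add_div]
  gcongr
  exact_mod_cast (primeCount_mono h).trans primeCount_or_le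

end PrimeCount

section HasPrimeDensity

variable {P Q N : ℕ → Prop} {c d : ℝ}

lemma hasPrimeDensity_false : HasPrimeDensity (fun _ => False) 0 := by
  unfold HasPrimeDensity primeRatio primeCount
  simp

lemma HasPrimeDensity.congr (h : ∀ p, p.Prime → (P p ↔ Q p)) (hP : HasPrimeDensity P c) :
    HasPrimeDensity Q c := by
  have hPQ : primeRatio P = primeRatio Q := funext fun x => by
    simp only [primeRatio, primeCount]
    rw [Set.ext fun p => and_congr_right fun _ => and_congr_right (h p)]
  rwa [HasPrimeDensity, ← hPQ]

lemma HasPrimeDensity.congr_of_null (hP : HasPrimeDensity P c) (hN : HasPrimeDensity N 0)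
    (h : ∀ p, p.Prime → ¬ N p → (P p ↔ Q p)) :
    HasPrimeDensity Q c := by
  have hQP := primeRatio_le_add (P := P) (Q := Q) (N := N) fun p hp hQ =>
    (em (N p)).elim Or.inr fun hN => Or.inl ((h p hp hN).2 hQ)
  have hPQ := primeRatio_le_add (P := Q) (Q := P) (N := N) fun p hp hP =>
    (em (N p)).elim Or.inr fun hN => Or.inl ((h p hp hN).1 hP)
  refine tendsto_of_tendsto_of_tendsto_of_le_of_le (by simpa using hP.sub hN)
    (by simpa using hP.add hN) (fun x => ?_) hQP
  linarith [hPQ x]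

lemma HasPrimeDensity.zero_of_imp (hQ : HasPrimeDensity Q 0) (h : ∀ p, p.Prime → P p → Q p) :
    HasPrimeDensity P 0 :=
  hasPrimeDensity_false.congr_of_null hQ fun p hp hQp => iff_of_false id (hQp ∘ h p hp)

lemma HasPrimeDensity.or_zero (hP : HasPrimeDensity P 0) (hQ : HasPrimeDensity Q 0) :
    HasPrimeDensity (fun p => P p ∨ Q p) 0 :=
  hP.congr_of_null hQ fun _ _ hQp => (or_iff_left hQp).symm

lemma HasPrimeDensity.or (h : ∀ p, p.Prime → P p → ¬ Q p) (hP : HasPrimeDensity P c)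
    (hQ : HasPrimeDensity Q d) : HasPrimeDensity (fun p => P p ∨ Q p) (c + d) :=
  (hP.add hQ).congr fun x => by
    rw [primeRatio, primeRatio, primeRatio, primeCount_or h, Nat.cast_add, add_div]

lemma HasPrimeDensity.exists_mem_finset {ι : Type*} {s : Finset ι} {Q : ι → ℕ → Prop}
    {c : ι → ℝ} (hdisj : (s : Set ι).Pairwise fun i j => ∀ p, p.Prime → Q i p → ¬ Q j p)
    (hQ : ∀ i ∈ s, HasPrimeDensity (Q i) (c i)) :
    HasPrimeDensity (fun p => ∃ i ∈ s, Q i p) (∑ i ∈ s, c i) := by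
  classical
  induction s using Finset.induction_on with
  | empty => simpa using hasPrimeDensity_false
  | insert a s ha ih =>
    simp only [Finset.exists_mem_insert, Finset.sum_insert ha]
    refine (hQ a (Finset.mem_insert_self a s)).or (fun p hp hQa ⟨i, hi, hQi⟩ => ?_)
      (ih (hdisj.mono (by simp)) fun i hi => hQ i (Finset.mem_insert_of_mem hi))
    exact hdisj (by simp) (by simp [hi]) (by rintro rfl; exact ha hi) p hp hQa hQi

end HasPrimeDensity

noncomputable def satoTateMass (a b : ℝ) : ℝ :=
  2 / π * ∫ t in a..b, sin t ^ 2

lemma satoTateMass_self (a : ℝ) : satoTateMass a a = 0 := by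
  simp [satoTateMass]

lemma satoTateMass_zero_pi : satoTateMass 0 π = 1 := by
  simp [satoTateMass, integral_sin_sq, pi_ne_zero]

lemma satoTateMass_pi_sub (a b : ℝ) : satoTateMass (π - b) (π - a) = satoTateMass a b := by
  simp only [satoTateMass, ← intervalIntegral.integral_comp_sub_left (fun t => sin t ^ 2),
    sin_pi_sub]

lemma sum_satoTateMass (a : ℕ → ℝ) (n : ℕ) :
    ∑ k ∈ Finset.range n, satoTateMass (a k) (a (k + 1)) = satoTateMass (a 0) (a n) := by
  rw [satoTateMass, ← intervalIntegral.sum_integral_adjacent_intervals (f := fun t => sin t ^ 2)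
    (μ := volume) fun k _ => (continuous_sin.pow 2).intervalIntegrable _ _, Finset.mul_sum]
  rfl

lemma satoTateMass_mul_satoTateMass {a₁ b₁ a₂ b₂ : ℝ} (h₁ : a₁ ≤ b₁) (h₂ : a₂ ≤ b₂) :
    satoTateMass a₁ b₁ * satoTateMass a₂ b₂ =
      4 / π ^ 2 * ∫ t₁ in Icc a₁ b₁, ∫ t₂ in Icc a₂ b₂, sin t₁ ^ 2 * sin t₂ ^ 2 := by
  simp only [integral_const_mul, integral_mul_const, integral_Icc_eq_integral_Ioc,
    ← intervalIntegral.integral_of_le h₁, ← intervalIntegral.integral_of_le h₂, satoTateMass]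
  ring

noncomputable def gridPoint (m j : ℕ) : ℝ :=
  j * π / m

def gridCell (m j : ℕ) : Set ℝ :=
  Ioo (gridPoint m j) (gridPoint m (j + 1))

section Grid

variable {m j : ℕ}

lemma gridPoint_zero (m : ℕ) : gridPoint m 0 = 0 := by
  simp [gridPoint]

lemma gridPoint_self (hm : m ≠ 0) : gridPoint m m = π := by
  simp [gridPoint, hm]

lemma gridPoint_nonneg (m j : ℕ) : 0 ≤ gridPoint m j := by
  unfold gridPoint; positivity

lemma gridPoint_mono (m : ℕ) : Monotone (gridPoint m) := fun i j hij => by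
  unfold gridPoint; gcongr

lemma gridPoint_le_pi (hj : j ≤ m) : gridPoint m j ≤ π :=
  div_le_of_le_mul₀ m.cast_nonneg pi_pos.le (by rw [mul_comm]; gcongr)

lemma pi_sub_gridPoint (hm : m ≠ 0) (hj : j ≤ m) : π - gridPoint m j = gridPoint m (m - j) := by
  rw [gridPoint, gridPoint, Nat.cast_sub hj]
  field_simp

lemma mem_gridCell_iff (hm : 0 < m) {t : ℝ} :
    t ∈ gridCell m j ↔ j * π < m * t ∧ m * t < (j + 1) * π := by
  have hm' : (0 : ℝ) < m := Nat.cast_pos.2 hm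
  simp only [gridCell, gridPoint, mem_Ioo, div_lt_iff₀ hm', lt_div_iff₀ hm', Nat.cast_succ,
    mul_comm t]

lemma floor_eq_of_mem_gridCell (hm : 0 < m) {t : ℝ} (ht : t ∈ gridCell m j) :
    ⌊m * t / π⌋₊ = j := by
  rw [mem_gridCell_iff hm] at ht
  have hmt : 0 ≤ m * t := (mul_nonneg j.cast_nonneg pi_pos.le).trans ht.1.le
  rw [Nat.floor_eq_iff (div_nonneg hmt pi_pos.le), le_div_iff₀ pi_pos,
    div_lt_iff₀ pi_pos]
  exact ⟨ht.1.le, ht.2⟩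

lemma eq_of_mem_gridCell (hm : 0 < m) {k : ℕ} {t : ℝ} (hj : t ∈ gridCell m j)
    (hk : t ∈ gridCell m k) : j = k :=
  (floor_eq_of_mem_gridCell hm hj).symm.trans (floor_eq_of_mem_gridCell hm hk)

lemma exists_mem_gridCell (hm : 0 < m) {t : ℝ} (ht : t ∈ Icc 0 π) (hsin : sin (m * t) ≠ 0) :
    ∃ j < m, t ∈ gridCell m j := by
  have hmt : 0 ≤ m * t / π := div_nonneg (mul_nonneg m.cast_nonneg ht.1) pi_pos.le
  set j := ⌊m * t / π⌋₊
  have hle : j * π ≤ m * t := (le_div_iff₀ pi_pos).1 (Nat.floor_le hmt)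
  have hlt : m * t < (j + 1) * π := (div_lt_iff₀ pi_pos).1 (Nat.lt_floor_add_one _)
  have hne : (j : ℝ) * π ≠ m * t := fun h => hsin (h ▸ sin_nat_mul_pi j)
  have hjm : j < m := by
    by_contra! hmj
    have : (m : ℝ) * π ≤ j * π := by gcongr
    nlinarith [ht.2, lt_of_le_of_ne hle hne, (Nat.cast_pos (α := ℝ)).2 hm]
  exact ⟨j, hjm, (mem_gridCell_iff hm).2 ⟨lt_of_le_of_ne hle hne, hlt⟩⟩

end Grid

lemma neg_one_pow_mul_sin_pos {u : ℝ} (j : ℕ) (h₁ : j * π < u) (h₂ : u < (j + 1) * π) :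
    0 < (-1) ^ j * sin u := by
  rw [← sin_sub_nat_mul_pi]
  exact sin_pos_of_pos_of_lt_pi (by linarith) (by linarith)

lemma sin_mul_sin_pos_iff_even {m j k : ℕ} (hm : 0 < m) {t₁ t₂ : ℝ} (h₁ : t₁ ∈ gridCell m j)
    (h₂ : t₂ ∈ gridCell m k) : 0 < sin (m * t₁) * sin (m * t₂) ↔ Even (j + k) := by
  rw [mem_gridCell_iff hm] at h₁ h₂
  have hpos := mul_pos (neg_one_pow_mul_sin_pos j h₁.1 h₁.2)
    (neg_one_pow_mul_sin_pos k h₂.1 h₂.2)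
  rw [mul_mul_mul_comm, ← pow_add] at hpos
  rcases Nat.even_or_odd (j + k) with hjk | hjk
  · rw [hjk.neg_one_pow, one_mul] at hpos
    exact iff_of_true hpos hjk
  · rw [hjk.neg_one_pow] at hpos
    exact iff_of_false (by linarith) (Nat.not_even_iff_odd.2 hjk)

lemma sin_mul_sin_pos_iff_exists {m : ℕ} (hm : 0 < m) {t₁ t₂ : ℝ} (ht₁ : t₁ ∈ Icc 0 π)
    (ht₂ : t₂ ∈ Icc 0 π) :
    0 < sin (m * t₁) * sin (m * t₂) ↔
      ∃ jk ∈ (Finset.range m ×ˢ Finset.range m).filter (fun jk => Even (jk.1 + jk.2)),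
        t₁ ∈ gridCell m jk.1 ∧ t₂ ∈ gridCell m jk.2 := by
  constructor
  · intro h
    obtain ⟨j, hj, h₁⟩ := exists_mem_gridCell hm ht₁ (left_ne_zero_of_mul h.ne')
    obtain ⟨k, hk, h₂⟩ := exists_mem_gridCell hm ht₂ (right_ne_zero_of_mul h.ne')
    exact ⟨(j, k), by simp [hj, hk, (sin_mul_sin_pos_iff_even hm h₁ h₂).1 h], h₁, h₂⟩
  · rintro ⟨⟨j, k⟩, hjk, h₁, h₂⟩
    exact (sin_mul_sin_pos_iff_even hm h₁ h₂).2 (Finset.mem_filter.1 hjk).2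

noncomputable def gridCellMass (m j : ℕ) : ℝ :=
  satoTateMass (gridPoint m j) (gridPoint m (j + 1))

lemma sum_gridCellMass {m : ℕ} (hm : m ≠ 0) : ∑ j ∈ Finset.range m, gridCellMass m j = 1 := by
  unfold gridCellMass
  rw [sum_satoTateMass, gridPoint_zero, gridPoint_self hm, satoTateMass_zero_pi]

lemma gridCellMass_reflect {m j : ℕ} (hj : j < m) :
    gridCellMass m (m - 1 - j) = gridCellMass m j := by
  rw [gridCellMass, gridCellMass, show m - 1 - j = m - (j + 1) by omega,
    show m - (j + 1) + 1 = m - j by omega, ← pi_sub_gridPoint (by omega) hj,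
    ← pi_sub_gridPoint (by omega) hj.le, satoTateMass_pi_sub]

lemma sum_neg_one_pow_mul_gridCellMass {m : ℕ} (hm : Even m) :
    ∑ j ∈ Finset.range m, (-1) ^ j * gridCellMass m j = 0 := by
  have hreflect : ∀ j ∈ Finset.range m,
      (-1) ^ (m - 1 - j) * gridCellMass m (m - 1 - j) = -((-1) ^ j * gridCellMass m j) := by
    intro j hj
    rw [Finset.mem_range] at hj
    have hsign : (-1 : ℝ) ^ (m - 1 - j) = -(-1) ^ j := by
      rw [Nat.even_iff] at hm
      rw [neg_eq_neg_one_mul ((-1 : ℝ) ^ j), ← pow_succ', neg_one_pow_eq_pow_mod_two,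
        neg_one_pow_eq_pow_mod_two (n := j + 1)]
      congr 1
      omega
    rw [hsign, gridCellMass_reflect hj, neg_mul]
  have h := Finset.sum_range_reflect (fun j => (-1) ^ j * gridCellMass m j) m
  rw [Finset.sum_congr rfl hreflect, Finset.sum_neg_distrib] at h
  linarith

lemma sum_filter_even_add_mul (s : Finset ℕ) (c : ℕ → ℝ) :
    ∑ jk ∈ (s ×ˢ s).filter (fun jk => Even (jk.1 + jk.2)), c jk.1 * c jk.2 =
      ((∑ j ∈ s, c j) ^ 2 + (∑ j ∈ s, (-1) ^ j * c j) ^ 2) / 2 := by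
  simp only [Finset.sum_filter, Finset.sum_product, sq, Finset.sum_mul_sum,
    ← Finset.sum_add_distrib, Finset.sum_div]
  refine Finset.sum_congr rfl fun j _ => Finset.sum_congr rfl fun k _ => ?_
  have hsign : (-1 : ℝ) ^ j * (-1) ^ k = if Even (j + k) then 1 else -1 := by
    rw [← pow_add]
    split_ifs with hjk
    exacts [hjk.neg_one_pow, (Nat.not_even_iff_odd.1 hjk).neg_one_pow]
  split_ifs at hsign ⊢ <;> linear_combination (-(c j * c k) / 2) * hsign

def PairSatoTateEquidistributed (θ₁ θ₂ : ℕ → ℝ) : Prop :=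
  ∀ a₁ b₁ a₂ b₂ : ℝ, 0 ≤ a₁ → a₁ ≤ b₁ → b₁ ≤ π → 0 ≤ a₂ → a₂ ≤ b₂ → b₂ ≤ π →
    HasPrimeDensity (fun p => θ₁ p ∈ Icc a₁ b₁ ∧ θ₂ p ∈ Icc a₂ b₂)
      (satoTateMass a₁ b₁ * satoTateMass a₂ b₂)

namespace PairSatoTateEquidistributed

variable {θ₁ θ₂ : ℕ → ℝ}

lemma of_tendsto
    (h : ∀ a₁ b₁ a₂ b₂ : ℝ, 0 ≤ a₁ → a₁ ≤ b₁ → b₁ ≤ π → 0 ≤ a₂ → a₂ ≤ b₂ → b₂ ≤ π →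
      Tendsto (fun x : ℕ =>
        (Nat.card {p : ℕ | p ≤ x ∧ p.Prime ∧ θ₁ p ∈ Icc a₁ b₁ ∧ θ₂ p ∈ Icc a₂ b₂} : ℝ) /
        (Nat.card {p : ℕ | p ≤ x ∧ p.Prime} : ℝ)) atTop
        (𝓝 (4 / π ^ 2 * ∫ t₁ in Icc a₁ b₁, ∫ t₂ in Icc a₂ b₂, sin t₁ ^ 2 * sin t₂ ^ 2))) :
    PairSatoTateEquidistributed θ₁ θ₂ := fun a₁ b₁ a₂ b₂ h₁ h₂ h₃ h₄ h₅ h₆ => by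
  rw [satoTateMass_mul_satoTateMass h₂ h₅]
  exact h a₁ b₁ a₂ b₂ h₁ h₂ h₃ h₄ h₅ h₆

lemma hasPrimeDensity_fst_eq (h : PairSatoTateEquidistributed θ₁ θ₂)
    (hθ₂ : ∀ p : ℕ, p.Prime → θ₂ p ∈ Icc 0 π) {t : ℝ} (ht : t ∈ Icc 0 π) :
    HasPrimeDensity (fun p => θ₁ p = t) 0 := by
  have hline := h t t 0 π ht.1 le_rfl ht.2 le_rfl pi_pos.le le_rfl
  rw [satoTateMass_self, zero_mul] at hline
  exact hline.zero_of_imp fun p hp hpt => ⟨hpt ▸ left_mem_Icc.2 le_rfl, hθ₂ p hp⟩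

lemma hasPrimeDensity_snd_eq (h : PairSatoTateEquidistributed θ₁ θ₂)
    (hθ₁ : ∀ p : ℕ, p.Prime → θ₁ p ∈ Icc 0 π) {t : ℝ} (ht : t ∈ Icc 0 π) :
    HasPrimeDensity (fun p => θ₂ p = t) 0 := by
  have hline := h 0 π t t le_rfl pi_pos.le le_rfl ht.1 le_rfl ht.2
  rw [satoTateMass_self, mul_zero] at hline
  exact hline.zero_of_imp fun p hp hpt => ⟨hθ₁ p hp, hpt ▸ left_mem_Icc.2 le_rfl⟩

lemma hasPrimeDensity_Ioo_Ioo (h : PairSatoTateEquidistributed θ₁ θ₂)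
    (hθ₁ : ∀ p : ℕ, p.Prime → θ₁ p ∈ Icc 0 π) (hθ₂ : ∀ p : ℕ, p.Prime → θ₂ p ∈ Icc 0 π)
    {a₁ b₁ a₂ b₂ : ℝ} (h₁ : 0 ≤ a₁) (h₂ : a₁ ≤ b₁) (h₃ : b₁ ≤ π) (h₄ : 0 ≤ a₂) (h₅ : a₂ ≤ b₂)
    (h₆ : b₂ ≤ π) :
    HasPrimeDensity (fun p => θ₁ p ∈ Ioo a₁ b₁ ∧ θ₂ p ∈ Ioo a₂ b₂)
      (satoTateMass a₁ b₁ * satoTateMass a₂ b₂) := by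
  have hboundary :
      HasPrimeDensity (fun p => (θ₁ p = a₁ ∨ θ₁ p = b₁) ∨ (θ₂ p = a₂ ∨ θ₂ p = b₂)) 0 :=
    ((h.hasPrimeDensity_fst_eq hθ₂ ⟨h₁, h₂.trans h₃⟩).or_zero
      (h.hasPrimeDensity_fst_eq hθ₂ ⟨h₁.trans h₂, h₃⟩)).or_zero
    ((h.hasPrimeDensity_snd_eq hθ₁ ⟨h₄, h₅.trans h₆⟩).or_zero
      (h.hasPrimeDensity_snd_eq hθ₁ ⟨h₄.trans h₅, h₆⟩))
  refine (h a₁ b₁ a₂ b₂ h₁ h₂ h₃ h₄ h₅ h₆).congr_of_null hboundary fun p _ hp => ?_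
  simp only [not_or] at hp
  simp [← Icc_sdiff_both, Set.mem_sdiff, hp.1.1, hp.1.2, hp.2.1, hp.2.2]

lemma hasPrimeDensity_gridCell (h : PairSatoTateEquidistributed θ₁ θ₂)
    (hθ₁ : ∀ p : ℕ, p.Prime → θ₁ p ∈ Icc 0 π) (hθ₂ : ∀ p : ℕ, p.Prime → θ₂ p ∈ Icc 0 π)
    {m j k : ℕ} (hj : j < m) (hk : k < m) :
    HasPrimeDensity (fun p => θ₁ p ∈ gridCell m j ∧ θ₂ p ∈ gridCell m k)
      (gridCellMass m j * gridCellMass m k) :=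
  h.hasPrimeDensity_Ioo_Ioo hθ₁ hθ₂ (gridPoint_nonneg m j) (gridPoint_mono m j.le_succ)
    (gridPoint_le_pi hj) (gridPoint_nonneg m k) (gridPoint_mono m k.le_succ) (gridPoint_le_pi hk)

end PairSatoTateEquidistributed

theorem pair_sign_density_pos_general
    (θ₁ θ₂ : ℕ → ℝ)
    (hθ₁ : ∀ p : ℕ, p.Prime → θ₁ p ∈ Set.Icc 0 π)
    (hθ₂ : ∀ p : ℕ, p.Prime → θ₂ p ∈ Set.Icc 0 π)
    (hequi : ∀ a₁ b₁ a₂ b₂ : ℝ,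
      0 ≤ a₁ → a₁ ≤ b₁ → b₁ ≤ π → 0 ≤ a₂ → a₂ ≤ b₂ → b₂ ≤ π →
      Tendsto (fun x : ℕ =>
        (Nat.card {p : ℕ | p ≤ x ∧ p.Prime ∧
          θ₁ p ∈ Set.Icc a₁ b₁ ∧ θ₂ p ∈ Set.Icc a₂ b₂} : ℝ) /
        (Nat.card {p : ℕ | p ≤ x ∧ p.Prime} : ℝ)) atTop
        (nhds ((4 / π ^ 2) *
          ∫ t₁ in Set.Icc a₁ b₁, ∫ t₂ in Set.Icc a₂ b₂,
            Real.sin t₁ ^ 2 * Real.sin t₂ ^ 2)))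
    (ν : ℕ) (hν : Odd ν) :
    Tendsto (fun x : ℕ =>
      (Nat.card {p : ℕ | p ≤ x ∧ p.Prime ∧
        0 < Real.sin (((ν : ℝ) + 1) * θ₁ p) * Real.sin (((ν : ℝ) + 1) * θ₂ p)} : ℝ) /
      (Nat.card {p : ℕ | p ≤ x ∧ p.Prime} : ℝ)) atTop (nhds (1 / 2)) := by
  have hST := PairSatoTateEquidistributed.of_tendsto hequi
  have hm : 0 < ν + 1 := ν.succ_pos
  have hcells := HasPrimeDensity.exists_mem_finset
    (s := (Finset.range (ν + 1) ×ˢ Finset.range (ν + 1)).filter fun jk => Even (jk.1 + jk.2))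
    (Q := fun jk p => θ₁ p ∈ gridCell (ν + 1) jk.1 ∧ θ₂ p ∈ gridCell (ν + 1) jk.2)
    (fun jk _ jk' _ hne p _ ⟨h₁, h₂⟩ ⟨h₁', h₂'⟩ =>
      hne (Prod.ext (eq_of_mem_gridCell hm h₁ h₁') (eq_of_mem_gridCell hm h₂ h₂')))
    fun jk hjk => by
      simp only [Finset.mem_filter, Finset.mem_product, Finset.mem_range] at hjk
      exact hST.hasPrimeDensity_gridCell hθ₁ hθ₂ hjk.1.1 hjk.1.2
  rw [sum_filter_even_add_mul, sum_gridCellMass hm.ne',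
    sum_neg_one_pow_mul_gridCellMass hν.add_one, one_pow, zero_pow two_ne_zero, add_zero] at hcells
  refine hcells.congr fun p hp => ?_
  have hsign := sin_mul_sin_pos_iff_exists hm (hθ₁ p hp) (hθ₂ p hp)
  rw [Nat.cast_succ] at hsign
  exact hsign.symm

/-- Analytic core of Theorem 1.2 (positive case): under pair Sato-Tate equidistribution of
the angles, primes `p` with `sin((ν+1)θ₁(p))·sin((ν+1)θ₂(p)) > 0` have natural density `1/2`. -/
theorem pair_sign_density_pos
    (θ₁ θ₂ : ℕ → ℝ)
    (hθ₁ : ∀ p : ℕ, p.Prime → θ₁ p ∈ Set.Icc 0 π)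
    (hθ₂ : ∀ p : ℕ, p.Prime → θ₂ p ∈ Set.Icc 0 π)
    (hequi : ∀ a₁ b₁ a₂ b₂ : ℝ,
      0 ≤ a₁ → a₁ ≤ b₁ → b₁ ≤ π → 0 ≤ a₂ → a₂ ≤ b₂ → b₂ ≤ π →
      Tendsto (fun x : ℕ =>
        (Nat.card {p : ℕ | p ≤ x ∧ p.Prime ∧
          θ₁ p ∈ Set.Icc a₁ b₁ ∧ θ₂ p ∈ Set.Icc a₂ b₂} : ℝ) /
        (Nat.card {p : ℕ | p ≤ x ∧ p.Prime} : ℝ)) atTop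
        (nhds ((4 / π ^ 2) *
          ∫ t₁ in Set.Icc a₁ b₁, ∫ t₂ in Set.Icc a₂ b₂,
            Real.sin t₁ ^ 2 * Real.sin t₂ ^ 2)))
    (ν : ℕ) (hν : Odd ν) (hν' : 0 < ν) :
    Tendsto (fun x : ℕ =>
      (Nat.card {p : ℕ | p ≤ x ∧ p.Prime ∧
        0 < Real.sin (((ν : ℝ) + 1) * θ₁ p) * Real.sin (((ν : ℝ) + 1) * θ₂ p)} : ℝ) /
      (Nat.card {p : ℕ | p ≤ x ∧ p.Prime} : ℝ)) atTop (nhds (1 / 2)) :=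
  pair_sign_density_pos_general θ₁ θ₂ hθ₁ hθ₂ hequi ν hν
end

section
/- Let θ₁, θ₂ be functions from the set of primes to (0, π) whose pairs are equidistributed with respect to the 2-product Sato-Tate measure, i.e. for all subintervals I₁, I₂ ⊆ [0, π], lim_{x→∞} #{p prime, p ≤ x : (θ₁(p), θ₂(p)) ∈ I₁ × I₂} / #{p prime, p ≤ x} = (4/π²)·∫_{I₁}∫_{I₂} sin²(t₁) sin²(t₂) dt₂ dt₁. Let c₁, c₂ be functions from the set of primes to [−1, 1], let ν be a positive odd integer, and for i = 1, 2 set bᵢ(p) = sin((ν+1)θᵢ(p)) − (cᵢ(p)/√p)·sin(νθᵢ(p)). Then there exist infinitely many primes p with b₁(p)·b₂(p) > 0 and infinitely many primes p with b₁(p)·b₂(p) < 0. -/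
/-!
Put `m = ν + 1`. On the window `A = [π/(4m), 3π/(4m)]` one has `sin(mθ) ≥ √2/2`, and on
`B = [5π/(4m), 7π/(4m)]` one has `sin(mθ) ≤ -√2/2`; both windows lie in `[0, π]` because `m ≥ 2`.
For `p ≥ 3` the perturbation `(c/√p)·sin(νθ)` has absolute value at most `1/√p < 1/√2`, so it
cannot change these signs. Sato-Tate equidistribution gives each product of two windows a positive
density of primes: the windows `(A, A)` give infinitely many primes with `b₁(p)b₂(p) > 0`, the
windows `(A, B)` infinitely many with `b₁(p)b₂(p) < 0`.
-/

open Real Filter MeasureTheory Set Topology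

lemma sqrt_two_div_two_le_sin {x : ℝ} (hx : x ∈ Icc (π / 4) (3 * π / 4)) : √2 / 2 ≤ sin x := by
  rw [← cos_pi_div_four, ← cos_sub_pi_div_two, ← cos_abs (x - π / 2)]
  exact cos_le_cos_of_nonneg_of_le_pi (abs_nonneg _) (by linarith [pi_pos])
    (abs_le.2 ⟨by linarith [hx.1], by linarith [hx.2]⟩)

lemma sin_le_neg_sqrt_two_div_two {x : ℝ} (hx : x ∈ Icc (5 * π / 4) (7 * π / 4)) :
    sin x ≤ -(√2 / 2) := by
  have h := sqrt_two_div_two_le_sin (x := x - π) ⟨by linarith [hx.1], by linarith [hx.2]⟩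
  rw [sin_sub_pi] at h
  linarith

lemma abs_div_sqrt_mul_lt_sqrt_two_div_two {p : ℕ} (hp : 2 < p) {c s : ℝ} (hc : |c| ≤ 1)
    (hs : |s| ≤ 1) : |c / √p * s| < √2 / 2 :=
  calc |c / √p * s| = |c| * |s| / √p := by
        rw [abs_mul, abs_div, abs_of_nonneg (sqrt_nonneg _)]; ring
    _ ≤ 1 / √p := by gcongr; exact mul_le_one₀ hc (abs_nonneg _) hs
    _ < 1 / √2 := by gcongr; exact_mod_cast hp
    _ = √2 / 2 := by field_simp; simp

lemma sin_sub_div_sqrt_mul_sin_pos {p : ℕ} (hp : 2 < p) {c x y : ℝ} (hc : c ∈ Icc (-1) 1)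
    (hx : x ∈ Icc (π / 4) (3 * π / 4)) : 0 < sin x - c / √p * sin y := by
  have h := abs_lt.1 (abs_div_sqrt_mul_lt_sqrt_two_div_two hp (abs_le.2 hc) (abs_sin_le_one y))
  linarith [sqrt_two_div_two_le_sin hx]

lemma sin_sub_div_sqrt_mul_sin_neg {p : ℕ} (hp : 2 < p) {c x y : ℝ} (hc : c ∈ Icc (-1) 1)
    (hx : x ∈ Icc (5 * π / 4) (7 * π / 4)) : sin x - c / √p * sin y < 0 := by
  have h := abs_lt.1 (abs_div_sqrt_mul_lt_sqrt_two_div_two hp (abs_le.2 hc) (abs_sin_le_one y))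
  linarith [sin_le_neg_sqrt_two_div_two hx]

lemma mul_mem_Icc_of_mem_Icc_div {m a b θ : ℝ} (hm : 0 < m) (hθ : θ ∈ Icc (a / m) (b / m)) :
    m * θ ∈ Icc a b :=
  ⟨(div_le_iff₀' hm).1 hθ.1, (le_div_iff₀' hm).1 hθ.2⟩

lemma tendsto_card_setOf_le_atTop {Q : ℕ → Prop} (hQ : {n | Q n}.Infinite) :
    Tendsto (fun x : ℕ => Nat.card {n | n ≤ x ∧ Q n}) atTop atTop := by
  classical
  have hcount : ∀ x, Nat.card {n | n ≤ x ∧ Q n} = Nat.count Q (x + 1) := fun x => by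
    rw [Nat.count_eq_card_fintype, Fintype.card_eq_nat_card]
    simp only [Nat.lt_succ_iff, coe_ofPred]
  simp only [hcount]
  refine (tendsto_add_atTop_iff_nat 1).2
    (tendsto_atTop_atTop_of_monotone' (Nat.count_monotone Q) ?_)
  simp [range_eq_univ.2 (Nat.surjective_count_of_infinite_setOfPred hQ)]

lemma infinite_of_tendsto_relative_density {Q P : ℕ → Prop} {L : ℝ} (hQ : {n | Q n}.Infinite)
    (hL : L ≠ 0)
    (h : Tendsto (fun x : ℕ => (Nat.card {n | n ≤ x ∧ Q n ∧ P n} : ℝ) /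
      Nat.card {n | n ≤ x ∧ Q n}) atTop (𝓝 L)) :
    {n | Q n ∧ P n}.Infinite := by
  intro hfin
  have hnum : ∀ x, (Nat.card {n | n ≤ x ∧ Q n ∧ P n} : ℝ) ≤ Nat.card {n | Q n ∧ P n} :=
    fun x => by exact_mod_cast Nat.card_mono hfin fun n (hn : n ≤ x ∧ Q n ∧ P n) => hn.2
  refine hL (tendsto_nhds_unique h ?_)
  exact tendsto_of_tendsto_of_tendsto_of_le_of_le tendsto_const_nhds
    (tendsto_const_nhds.div_atTop
      (tendsto_natCast_atTop_atTop.comp (tendsto_card_setOf_le_atTop hQ)))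
    (fun x => by positivity) (fun x => div_le_div_of_nonneg_right (hnum x) (Nat.cast_nonneg _))

lemma integral_Icc_sin_sq_pos {a b : ℝ} (ha : 0 ≤ a) (hab : a < b) (hb : b ≤ π) :
    0 < ∫ t in Icc a b, sin t ^ 2 := by
  rw [integral_Icc_eq_integral_Ioc, ← intervalIntegral.integral_of_le hab.le]
  refine intervalIntegral.intervalIntegral_pos_of_pos_on
    ((continuous_sin.pow 2).intervalIntegrable a b) (fun x hx => ?_) hab
  have := sin_pos_of_pos_of_lt_pi (ha.trans_lt hx.1) (hx.2.trans_le hb)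
  positivity

def IsSatoTateEquidistributed (θ₁ θ₂ : ℕ → ℝ) : Prop :=
  ∀ a₁ b₁ a₂ b₂ : ℝ, 0 ≤ a₁ → a₁ ≤ b₁ → b₁ ≤ π → 0 ≤ a₂ → a₂ ≤ b₂ → b₂ ≤ π →
    Tendsto (fun x : ℕ =>
      (Nat.card {p : ℕ | p ≤ x ∧ p.Prime ∧ θ₁ p ∈ Icc a₁ b₁ ∧ θ₂ p ∈ Icc a₂ b₂} : ℝ) /
      (Nat.card {p : ℕ | p ≤ x ∧ p.Prime} : ℝ)) atTop
      (𝓝 ((4 / π ^ 2) *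
        ∫ t₁ in Icc a₁ b₁, ∫ t₂ in Icc a₂ b₂, sin t₁ ^ 2 * sin t₂ ^ 2))

lemma IsSatoTateEquidistributed.infinite_setOf_prime {θ₁ θ₂ : ℕ → ℝ}
    (h : IsSatoTateEquidistributed θ₁ θ₂) {a₁ b₁ a₂ b₂ : ℝ}
    (ha₁ : 0 ≤ a₁) (hab₁ : a₁ < b₁) (hb₁ : b₁ ≤ π) (ha₂ : 0 ≤ a₂) (hab₂ : a₂ < b₂) (hb₂ : b₂ ≤ π) :
    {p : ℕ | p.Prime ∧ θ₁ p ∈ Icc a₁ b₁ ∧ θ₂ p ∈ Icc a₂ b₂}.Infinite := by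
  have hmass : 0 < 4 / π ^ 2 *
      ∫ t₁ in Icc a₁ b₁, ∫ t₂ in Icc a₂ b₂, sin t₁ ^ 2 * sin t₂ ^ 2 := by
    simp_rw [integral_const_mul, integral_mul_const]
    have := pi_pos
    exact mul_pos (by positivity)
      (mul_pos (integral_Icc_sin_sq_pos ha₁ hab₁ hb₁) (integral_Icc_sin_sq_pos ha₂ hab₂ hb₂))
  exact infinite_of_tendsto_relative_density Nat.infinite_setOfPred_prime hmass.ne'
    (h a₁ b₁ a₂ b₂ ha₁ hab₁.le hb₁ ha₂ hab₂.le hb₂)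

theorem half_integral_sign_changes_infinitely_general
    (θ₁ θ₂ : ℕ → ℝ)
    (hequi : ∀ a₁ b₁ a₂ b₂ : ℝ,
      0 ≤ a₁ → a₁ ≤ b₁ → b₁ ≤ π → 0 ≤ a₂ → a₂ ≤ b₂ → b₂ ≤ π →
      Tendsto (fun x : ℕ =>
        (Nat.card {p : ℕ | p ≤ x ∧ p.Prime ∧
          θ₁ p ∈ Set.Icc a₁ b₁ ∧ θ₂ p ∈ Set.Icc a₂ b₂} : ℝ) /
        (Nat.card {p : ℕ | p ≤ x ∧ p.Prime} : ℝ)) atTop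
        (nhds ((4 / π ^ 2) *
          ∫ t₁ in Set.Icc a₁ b₁, ∫ t₂ in Set.Icc a₂ b₂,
            Real.sin t₁ ^ 2 * Real.sin t₂ ^ 2)))
    (c₁ c₂ : ℕ → ℝ)
    (hc₁ : ∀ p : ℕ, p.Prime → c₁ p ∈ Set.Icc (-1 : ℝ) 1)
    (hc₂ : ∀ p : ℕ, p.Prime → c₂ p ∈ Set.Icc (-1 : ℝ) 1)
    (ν : ℕ) (hν' : 0 < ν)
    (b₁ b₂ : ℕ → ℝ)
    (hb₁ : ∀ p : ℕ, b₁ p =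
      Real.sin (((ν : ℝ) + 1) * θ₁ p) - (c₁ p / Real.sqrt p) * Real.sin ((ν : ℝ) * θ₁ p))
    (hb₂ : ∀ p : ℕ, b₂ p =
      Real.sin (((ν : ℝ) + 1) * θ₂ p) - (c₂ p / Real.sqrt p) * Real.sin ((ν : ℝ) * θ₂ p)) :
    {p : ℕ | p.Prime ∧ 0 < b₁ p * b₂ p}.Infinite ∧
    {p : ℕ | p.Prime ∧ b₁ p * b₂ p < 0}.Infinite := by
  set m : ℝ := ν + 1
  have hm : 2 ≤ m := by
    have : (1 : ℝ) ≤ ν := by exact_mod_cast hν'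
    linarith
  have hm0 : 0 < m := by linarith
  have hπ := pi_pos
  have hwindow : ∀ a b : ℝ, 0 ≤ a → a < b → b ≤ 7 * π / 4 →
      {p : ℕ | p.Prime ∧ θ₁ p ∈ Icc (π / 4 / m) (3 * π / 4 / m) ∧
        θ₂ p ∈ Icc (a / m) (b / m)}.Infinite :=
    fun a b ha hab hb => IsSatoTateEquidistributed.infinite_setOf_prime hequi (by positivity)
      (by gcongr; linarith) ((div_le_iff₀ hm0).2 (by nlinarith)) (by positivity)
      (by gcongr) ((div_le_iff₀ hm0).2 (by nlinarith))
  have hA := hwindow (π / 4) (3 * π / 4) (by positivity) (by linarith) (by linarith)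
  have hB := hwindow (5 * π / 4) (7 * π / 4) (by positivity) (by linarith) le_rfl
  constructor
  · refine (hA.sdiff (finite_Iic 2)).mono ?_
    rintro p ⟨⟨hp, h₁, h₂⟩, hp2 : ¬p ≤ 2⟩
    rw [mem_ofPred_eq, hb₁, hb₂]
    exact ⟨hp, mul_pos
      (sin_sub_div_sqrt_mul_sin_pos (not_le.1 hp2) (hc₁ p hp) (mul_mem_Icc_of_mem_Icc_div hm0 h₁))
      (sin_sub_div_sqrt_mul_sin_pos (not_le.1 hp2) (hc₂ p hp) (mul_mem_Icc_of_mem_Icc_div hm0 h₂))⟩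
  · refine (hB.sdiff (finite_Iic 2)).mono ?_
    rintro p ⟨⟨hp, h₁, h₂⟩, hp2 : ¬p ≤ 2⟩
    rw [mem_ofPred_eq, hb₁, hb₂]
    exact ⟨hp, mul_neg_of_pos_of_neg
      (sin_sub_div_sqrt_mul_sin_pos (not_le.1 hp2) (hc₁ p hp) (mul_mem_Icc_of_mem_Icc_div hm0 h₁))
      (sin_sub_div_sqrt_mul_sin_neg (not_le.1 hp2) (hc₂ p hp) (mul_mem_Icc_of_mem_Icc_div hm0 h₂))⟩

/-- Analytic core of Theorem 1.3 (positive case): with pair Sato-Tate equidistributed angles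
`θᵢ(p) ∈ (0,π)` and `bᵢ(p) = sin((ν+1)θᵢ(p)) − (cᵢ(p)/√p)·sin(νθᵢ(p))`, there are infinitely many primes
`p` with `b₁(p)b₂(p) > 0` and infinitely many with `b₁(p)b₂(p) < 0`. -/
theorem half_integral_sign_changes_infinitely
    (θ₁ θ₂ : ℕ → ℝ)
    (hθ₁ : ∀ p : ℕ, p.Prime → θ₁ p ∈ Set.Ioo 0 π)
    (hθ₂ : ∀ p : ℕ, p.Prime → θ₂ p ∈ Set.Ioo 0 π)
    (hequi : ∀ a₁ b₁ a₂ b₂ : ℝ,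
      0 ≤ a₁ → a₁ ≤ b₁ → b₁ ≤ π → 0 ≤ a₂ → a₂ ≤ b₂ → b₂ ≤ π →
      Tendsto (fun x : ℕ =>
        (Nat.card {p : ℕ | p ≤ x ∧ p.Prime ∧
          θ₁ p ∈ Set.Icc a₁ b₁ ∧ θ₂ p ∈ Set.Icc a₂ b₂} : ℝ) /
        (Nat.card {p : ℕ | p ≤ x ∧ p.Prime} : ℝ)) atTop
        (nhds ((4 / π ^ 2) *
          ∫ t₁ in Set.Icc a₁ b₁, ∫ t₂ in Set.Icc a₂ b₂,
            Real.sin t₁ ^ 2 * Real.sin t₂ ^ 2)))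
    (c₁ c₂ : ℕ → ℝ)
    (hc₁ : ∀ p : ℕ, p.Prime → c₁ p ∈ Set.Icc (-1 : ℝ) 1)
    (hc₂ : ∀ p : ℕ, p.Prime → c₂ p ∈ Set.Icc (-1 : ℝ) 1)
    (ν : ℕ) (hν : Odd ν) (hν' : 0 < ν)
    (b₁ b₂ : ℕ → ℝ)
    (hb₁ : ∀ p : ℕ, b₁ p =
      Real.sin (((ν : ℝ) + 1) * θ₁ p) - (c₁ p / Real.sqrt p) * Real.sin ((ν : ℝ) * θ₁ p))
    (hb₂ : ∀ p : ℕ, b₂ p =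
      Real.sin (((ν : ℝ) + 1) * θ₂ p) - (c₂ p / Real.sqrt p) * Real.sin ((ν : ℝ) * θ₂ p)) :
    {p : ℕ | p.Prime ∧ 0 < b₁ p * b₂ p}.Infinite ∧
    {p : ℕ | p.Prime ∧ b₁ p * b₂ p < 0}.Infinite :=
  half_integral_sign_changes_infinitely_general θ₁ θ₂ hequi c₁ c₂ hc₁ hc₂ ν hν' b₁ b₂ hb₁ hb₂
end
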